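/- arXiv:1805.06724 — 3 statements merged into one kernel-verified Lean document; each statement's English description precedes it below -/
import Mathlib

section
/- Suppose (x*, y*) is an equilibrium of the broadcast max-consensus dynamics on a connected graph with at least two nodes, where x* = c·1 is constant. Then y* must equal the all-ones vector: if y*_i = 0 for some i, the equilibrium conditions are violated. -/
open Finset
open scoped BigOperators

lemma Finset.dite_nonempty_sum_div_card_eq_expect {α K : Type*} [Semifield K] [CharZero K]
    (s : Finset α) (f : α → K) :
    (if _ : s.Nonempty then (∑ j ∈ s, f j) / (s.card : K) else 0) = 𝔼 j ∈ s, f j := by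
  rw [expect_eq_sum_div_card]
  split_ifs with hs
  · rfl
  · simp [not_nonempty_iff_eq_empty.mp hs]

lemma Finset.expect_le_of_nonneg {α K : Type*} [Semifield K] [LinearOrder K] [IsStrictOrderedRing K]
    {s : Finset α} {f : α → K} {c : K} (hc : 0 ≤ c) (hf : ∀ j ∈ s, f j ≤ c) :
    𝔼 j ∈ s, f j ≤ c := by
  rcases s.eq_empty_or_nonempty with rfl | hs
  · simpa using hc
  · exact expect_le hs hf

theorem stmt_8_general {ι : Type*} [Fintype ι]
    (G : SimpleGraph ι) [DecidableRel G.Adj]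
    (c : ℝ) (hc : 0 ≤ c)
    (x : ι → ℝ) (y : ι → Bool) (u : ι → ℝ)
    (hx : ∀ i, x i = c)
    (hu : ∀ i, u i =
      if h : ((G.neighborFinset i).filter (fun j => y j = true)).Nonempty then
        (∑ j ∈ (G.neighborFinset i).filter (fun j => y j = true), x j) /
          (((G.neighborFinset i).filter (fun j => y j = true)).card : ℝ)
      else 0)
    (heq2 : ∀ i, y i = decide (u i ≤ x i)) :
    ∀ i, y i = true := by
  intro i
  have hu_le : u i ≤ c := by
    rw [hu i, dite_nonempty_sum_div_card_eq_expect _ x]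
    exact expect_le_of_nonneg hc fun j _ => (hx j).le
  simpa [heq2 i, hx i] using hu_le

/-- If `(x*, y*)` with `x* = c·1` constant is an equilibrium of the broadcast
max-consensus dynamics on a connected graph with at least two nodes, then the
authorization vector `y*` must be all ones. -/
theorem stmt_8 {ι : Type*} [Fintype ι] [DecidableEq ι]
    (G : SimpleGraph ι) [DecidableRel G.Adj]
    (hconn : G.Connected) (hcard : 2 ≤ Fintype.card ι)
    (c : ℝ) (hc : 0 ≤ c)
    (x : ι → ℝ) (y : ι → Bool) (u : ι → ℝ)
    (hx : ∀ i, x i = c)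
    (hu : ∀ i, u i =
      if h : ((G.neighborFinset i).filter (fun j => y j = true)).Nonempty then
        (∑ j ∈ (G.neighborFinset i).filter (fun j => y j = true), x j) /
          (((G.neighborFinset i).filter (fun j => y j = true)).card : ℝ)
      else 0)
    (heq1 : ∀ i, x i = max (x i) (u i))
    (heq2 : ∀ i, y i = decide (u i ≤ x i)) :
    ∀ i, y i = true :=
  stmt_8_general G c hc x y u hx hu heq2
end

section
/- Suppose (x*, 1) is an equilibrium of the broadcast max-consensus dynamics on a connected graph with at least two nodes, where the authorization vector is all ones. Then x* must be a constant vector: all components of x* are equal. -/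
/-!
Minimum principle: at an agent where `x` is minimal, the neighbours' average exceeds `x` unless
every neighbour shares the minimal value. The equilibrium condition rules out the strict case, so
the minimisers form a set closed under adjacency, which by connectedness is everything.
-/

open Finset

theorem Finset.lt_sum_div_card_of_forall_le_of_exists_lt {ι : Type*} {s : Finset ι} {f : ι → ℝ}
    {c : ℝ} (hle : ∀ j ∈ s, c ≤ f j) (hlt : ∃ j ∈ s, c < f j) : c < (∑ j ∈ s, f j) / #s := by
  have hcard : (0 : ℝ) < #s := by
    obtain ⟨b, hb, -⟩ := hlt
    exact_mod_cast card_pos.mpr ⟨b, hb⟩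
  rw [lt_div_iff₀ hcard]
  calc c * #s = ∑ _j ∈ s, c := by rw [sum_const, nsmul_eq_mul, mul_comm]
    _ < ∑ j ∈ s, f j := sum_lt_sum hle hlt

namespace SimpleGraph

variable {V : Type*} {G : SimpleGraph V}

theorem Reachable.of_forall_adj {p : V → Prop} (hp : ∀ v w, G.Adj v w → p v → p w) {u v : V}
    (huv : G.Reachable u v) (hu : p u) : p v := by
  obtain ⟨w⟩ := huv
  induction w with
  | nil => exact hu
  | cons hadj _ ih => exact ih (hp _ _ hadj hu)

theorem Adj.eq_of_neighbor_average_le {x : V → ℝ} {a b : V} [Fintype (G.neighborSet a)]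
    (hab : G.Adj a b) (hle : ∀ j, G.Adj a j → x a ≤ x j)
    (havg : (∑ j ∈ G.neighborFinset a, x j) / #(G.neighborFinset a) ≤ x a) : x b = x a := by
  by_contra hne
  refine havg.not_gt (lt_sum_div_card_of_forall_le_of_exists_lt (fun j hj ↦ ?_) ⟨b, ?_, ?_⟩)
  · exact hle j ((mem_neighborFinset G a j).mp hj)
  · exact (mem_neighborFinset G a b).mpr hab
  · exact (hle b hab).lt_of_ne' hne

end SimpleGraph

theorem stmt_9_general {ι : Type*} [Fintype ι]
    (G : SimpleGraph ι) [DecidableRel G.Adj]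
    (hconn : G.Connected)
    (x u : ι → ℝ)
    (hu : ∀ i, u i = (∑ j ∈ G.neighborFinset i, x j) / ((G.neighborFinset i).card : ℝ))
    (heq : ∀ i, u i ≤ x i) :
    ∀ i j, x i = x j := by
  have := hconn.nonempty
  obtain ⟨m, hm⟩ := Finite.exists_min x
  have hclosed : ∀ a b, G.Adj a b → x a = x m → x b = x m := fun a b hab ha ↦
    (hab.eq_of_neighbor_average_le (fun j _ ↦ ha ▸ hm j) (hu a ▸ heq a)).trans ha
  have hall : ∀ k, x k = x m := fun k ↦ (hconn.preconnected m k).of_forall_adj hclosed rfl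
  intro i j
  rw [hall i, hall j]

/-- If `(x*, 1)` is an equilibrium of the broadcast max-consensus dynamics on a
connected graph with at least two nodes (so every agent's state dominates the
average of its neighbors' states), then `x*` is a constant vector. -/
theorem stmt_9 {ι : Type*} [Fintype ι] [DecidableEq ι]
    (G : SimpleGraph ι) [DecidableRel G.Adj]
    (hconn : G.Connected) (hcard : 2 ≤ Fintype.card ι)
    (x u : ι → ℝ)
    (hu : ∀ i, u i = (∑ j ∈ G.neighborFinset i, x j) / ((G.neighborFinset i).card : ℝ))
    (heq : ∀ i, u i ≤ x i) :
    ∀ i j, x i = x j :=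
  stmt_9_general G hconn x u hu heq
end

section
/- Let V(k) = 2n·c − ∑_{i∈N} (x_i(k) + x_i(k−1)), where c = max_j x_j(1), for the broadcast max-consensus dynamics on a connected graph with at least two nodes. Then V is nonnegative along all trajectories, V(k) = 0 if and only if x(k) = x(k−1) = c·1, and V is strictly decreasing along trajectories whenever x(k−1) ≠ c·1 or x(k) ≠ c·1. -/
/-!
Since each `x_i` is nondecreasing and bounded by `c = max_j x_j(1)` (an average of values
`≤ c`, or the default `0 ≤ c`, never exceeds `c`), every term `2c - x_i(k) - x_i(k-1)` of `V(k)`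
is nonnegative, which gives nonnegativity and the characterisation of `V(k) = 0`.
Since `V(k) - V(k+1) = ∑_i (x_i(k+1) - x_i(k-1))`, strict decrease is a two-step contraction:
either some `x_i` moves between `k-1` and `k`, or `x(k) = x(k-1)`, in which case every node is
authorized at time `k`, and a minimizer of `x(k)` adjacent to a strictly larger node (it exists by
connectedness as long as `x(k) ≠ c·1`) raises its value at time `k+1`.
-/

open Finset

section

variable {ι : Type*} [Fintype ι]

theorem sum_add_le_two_mul_card_mul {f g : ι → ℝ} {c : ℝ} (hf : ∀ i, f i ≤ c)
    (hg : ∀ i, g i ≤ c) : ∑ i, (f i + g i) ≤ 2 * Fintype.card ι * c := by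
  calc ∑ i, (f i + g i) ≤ ∑ _i : ι, 2 * c := sum_le_sum fun i _ => by linarith [hf i, hg i]
    _ = 2 * Fintype.card ι * c := by rw [sum_const, card_univ, nsmul_eq_mul]; ring

theorem sum_add_eq_two_mul_card_mul_iff {f g : ι → ℝ} {c : ℝ} (hf : ∀ i, f i ≤ c)
    (hg : ∀ i, g i ≤ c) : ∑ i, (f i + g i) = 2 * Fintype.card ι * c ↔ ∀ i, f i = c ∧ g i = c := by
  have hconst : 2 * Fintype.card ι * c = ∑ _i : ι, 2 * c := by
    rw [sum_const, card_univ, nsmul_eq_mul]; ring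
  rw [hconst, sum_eq_sum_iff_of_le fun i _ => by linarith [hf i, hg i]]
  refine forall_congr' fun i => ⟨fun hi => ?_, fun hi _ => by rw [hi.1, hi.2]; ring⟩
  have := hi (mem_univ i)
  constructor <;> linarith [hf i, hg i]

namespace SimpleGraph

variable {G : SimpleGraph ι}

theorem Connected.exists_adj_min_lt [Nonempty ι] (hG : G.Connected) {f : ι → ℝ}
    (hf : ∃ i j, f i < f j) :
    ∃ i j, G.Adj i j ∧ (∀ l, f i ≤ f l) ∧ f i < f j := by
  obtain ⟨i₀, -, hi₀⟩ := exists_min_image univ f univ_nonempty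
  obtain ⟨a, b, hab⟩ := hf
  have hb : f i₀ < f b := (hi₀ a (mem_univ a)).trans_lt hab
  obtain ⟨p⟩ := hG.preconnected i₀ b
  obtain ⟨d, -, hd₁, hd₂⟩ := p.exists_boundary_dart {i | f i = f i₀} rfl hb.ne'
  have hd₁ : f d.fst = f i₀ := hd₁
  refine ⟨d.fst, d.snd, d.adj, fun l => hd₁ ▸ hi₀ l (mem_univ l), ?_⟩
  rw [hd₁]
  exact lt_of_le_of_ne (hi₀ _ (mem_univ _)) (Ne.symm hd₂)

variable [DecidableRel G.Adj]

variable (G) in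
noncomputable def authorizedAvg (f : ι → ℝ) (b : ι → Bool) (i : ι) : ℝ :=
  if ((G.neighborFinset i).filter (fun j => b j = true)).Nonempty then
    (∑ j ∈ (G.neighborFinset i).filter (fun j => b j = true), f j) /
      (((G.neighborFinset i).filter (fun j => b j = true)).card : ℝ)
  else 0

theorem authorizedAvg_le {f : ι → ℝ} {c : ℝ} (hf : ∀ j, f j ≤ c) (hc : 0 ≤ c) (b : ι → Bool)
    (i : ι) : G.authorizedAvg f b i ≤ c := by
  unfold authorizedAvg
  split_ifs with hs
  · rw [div_le_iff₀ (by exact_mod_cast hs.card_pos), mul_comm, ← nsmul_eq_mul]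
    exact sum_le_card_nsmul _ _ _ fun j _ => hf j
  · exact hc

theorem lt_authorizedAvg {f : ι → ℝ} {b : ι → Bool} (hb : ∀ j, b j = true) {m : ℝ}
    (hm : ∀ l, m ≤ f l) {i j : ι} (hij : G.Adj i j) (hj : m < f j) :
    m < G.authorizedAvg f b i := by
  have hall : (G.neighborFinset i).filter (fun l => b l = true) = G.neighborFinset i :=
    filter_true_of_mem fun l _ => hb l
  have hji : j ∈ G.neighborFinset i := (G.mem_neighborFinset i j).2 hij
  have hsum : (G.neighborFinset i).card • m < ∑ l ∈ G.neighborFinset i, f l := by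
    rw [← sum_const]
    exact sum_lt_sum (fun l _ => hm l) ⟨j, hji, hj⟩
  rw [authorizedAvg, hall, if_pos ⟨j, hji⟩, lt_div_iff₀ (by exact_mod_cast card_pos.2 ⟨j, hji⟩),
    mul_comm, ← nsmul_eq_mul]
  exact hsum

end SimpleGraph

structure IsMaxConsensusTrajectory (G : SimpleGraph ι) [DecidableRel G.Adj]
    (x : ι → ℕ → ℝ) (y : ι → ℕ → Bool) (u : ι → ℕ → ℝ) : Prop where
  u_eq : ∀ i k, u i k = G.authorizedAvg (x · k) (y · k) i
  x_succ : ∀ i k, x i (k + 1) = max (x i k) (u i k)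
  y_succ : ∀ i k, y i (k + 1) = decide (u i k ≤ x i k)

namespace IsMaxConsensusTrajectory

variable {G : SimpleGraph ι} [DecidableRel G.Adj] {x : ι → ℕ → ℝ} {y : ι → ℕ → Bool}
  {u : ι → ℕ → ℝ}

theorem monotone (h : IsMaxConsensusTrajectory G x y u) (i : ι) : Monotone (x i) :=
  monotone_nat_of_le_succ fun k => (h.x_succ i k).symm ▸ le_max_left _ _

theorem le_of_le {c : ℝ} (h : IsMaxConsensusTrajectory G x y u) (hc : 0 ≤ c) {k₀ : ℕ}
    (hk₀ : ∀ i, x i k₀ ≤ c) {k : ℕ} (hk : k₀ ≤ k) (i : ι) : x i k ≤ c := by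
  induction k, hk using Nat.le_induction generalizing i with
  | base => exact hk₀ i
  | succ k _ ih =>
    rw [h.x_succ, h.u_eq]
    exact max_le (ih i) (SimpleGraph.authorizedAvg_le ih hc _ _)

theorem authorized_of_stalled (h : IsMaxConsensusTrajectory G x y u) {i : ι} {k : ℕ}
    (hi : x i (k + 1) = x i k) : y i (k + 1) = true := by
  have hu : u i k ≤ x i k := hi ▸ h.x_succ i k ▸ le_max_right _ _
  simpa [h.y_succ] using hu

theorem sum_lt_sum_add_two [Nonempty ι] (h : IsMaxConsensusTrajectory G x y u)
    (hG : G.Connected) {k : ℕ} (hk : ∃ i j, x i k < x j (k + 1)) :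
    ∑ i, x i k < ∑ i, x i (k + 2) := by
  have hle : ∀ i, x i k ≤ x i (k + 2) := fun i => h.monotone i (by omega)
  suffices ∃ i, x i k < x i (k + 2) by
    obtain ⟨i, hi⟩ := this
    exact sum_lt_sum (fun i _ => hle i) ⟨i, mem_univ i, hi⟩
  by_cases hstall : ∀ i, x i (k + 1) = x i k
  · obtain ⟨i, j, hij, hmin, hlt⟩ :=
      hG.exists_adj_min_lt (f := (x · (k + 1))) (by simpa only [hstall] using hk)
    have hauth : ∀ l, y l (k + 1) = true := fun l => h.authorized_of_stalled (hstall l)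
    refine ⟨i, ?_⟩
    calc x i k = x i (k + 1) := (hstall i).symm
      _ < u i (k + 1) := h.u_eq i (k + 1) ▸ SimpleGraph.lt_authorizedAvg hauth hmin hij hlt
      _ ≤ x i (k + 2) := h.x_succ i (k + 1) ▸ le_max_right _ _
  · push Not at hstall
    obtain ⟨i, hi⟩ := hstall
    exact ⟨i, (lt_of_le_of_ne (h.monotone i (Nat.le_succ k)) hi.symm).trans_le
      (h.monotone i (Nat.le_succ _))⟩

end IsMaxConsensusTrajectory

end

theorem stmt_17_general {ι : Type*} [Fintype ι] [Nonempty ι]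
    (G : SimpleGraph ι) [DecidableRel G.Adj]
    (hconn : G.Connected)
    (x : ι → ℕ → ℝ) (y : ι → ℕ → Bool) (u : ι → ℕ → ℝ)
    (hx1 : ∀ i, 0 ≤ x i 1)
    (hu : ∀ i k, u i k =
      if h : ((G.neighborFinset i).filter (fun j => y j k = true)).Nonempty then
        (∑ j ∈ (G.neighborFinset i).filter (fun j => y j k = true), x j k) /
          (((G.neighborFinset i).filter (fun j => y j k = true)).card : ℝ)
      else 0)
    (hxdyn : ∀ i k, x i (k + 1) = max (x i k) (u i k))
    (hydyn : ∀ i k, y i (k + 1) = decide (u i k ≤ x i k))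
    (c : ℝ) (hc : c = Finset.univ.sup' Finset.univ_nonempty (fun j => x j 1))
    (V : ℕ → ℝ)
    (hV : ∀ k, V k = 2 * (Fintype.card ι : ℝ) * c - ∑ i, (x i k + x i (k - 1))) :
    ∀ k, 2 ≤ k →
      (0 ≤ V k) ∧
      (V k = 0 ↔ ∀ i, x i k = c ∧ x i (k - 1) = c) ∧
      (((¬ ∀ i, x i (k - 1) = c) ∨ (¬ ∀ i, x i k = c)) → V (k + 1) < V k) := by
  have h : IsMaxConsensusTrajectory G x y u := ⟨hu, hxdyn, hydyn⟩
  have hx1c : ∀ i, x i 1 ≤ c := fun i => hc ▸ le_sup' (fun j => x j 1) (mem_univ i)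
  obtain ⟨j₀, -, hj₀⟩ := exists_mem_eq_sup' univ_nonempty (fun j => x j 1)
  have hcj₀ : c = x j₀ 1 := hc.trans hj₀
  have hc0 : 0 ≤ c := hcj₀ ▸ hx1 j₀
  have hxc : ∀ {k}, 1 ≤ k → ∀ i, x i k ≤ c := fun hk => h.le_of_le hc0 hx1c hk
  intro k hk
  have hxk := hxc (k := k) (by omega)
  have hxk' := hxc (k := k - 1) (by omega)
  refine ⟨?_, ?_, fun hne => ?_⟩
  · rw [hV, sub_nonneg]; exact sum_add_le_two_mul_card_mul hxk hxk'
  · rw [hV, sub_eq_zero, eq_comm, sum_add_eq_two_mul_card_mul_iff hxk hxk']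
  · have hnc : ∃ i, x i (k - 1) < c := by
      by_contra! hge
      have hall : ∀ i, x i (k - 1) = c := fun i => le_antisymm (hxk' i) (hge i)
      refine hne.elim (· hall) (· fun i => le_antisymm (hxk i) ?_)
      exact hall i ▸ h.monotone i (Nat.sub_le k 1)
    obtain ⟨i, hi⟩ := hnc
    have hj₀k : x j₀ k = c := le_antisymm (hxk j₀) (hcj₀ ▸ h.monotone j₀ (by omega))
    have hsum := h.sum_lt_sum_add_two hconn (k := k - 1)
      ⟨i, j₀, by rwa [Nat.sub_add_cancel (by omega : 1 ≤ k), hj₀k]⟩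
    rw [show k - 1 + 2 = k + 1 by omega] at hsum
    rw [hV, hV, Nat.add_sub_cancel, sum_add_distrib, sum_add_distrib]
    linarith

/-- Lyapunov function for the broadcast max-consensus dynamics:
`V(k) = 2n·c − ∑_i (x_i(k) + x_i(k−1))` with `c` the initial maximum is
nonnegative along trajectories, vanishes exactly at consensus
(`x(k) = x(k−1) = c·1`), and strictly decreases whenever
`x(k−1) ≠ c·1` or `x(k) ≠ c·1`. -/
theorem stmt_17 {ι : Type*} [Fintype ι] [Nonempty ι] [DecidableEq ι]
    (G : SimpleGraph ι) [DecidableRel G.Adj]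
    (hconn : G.Connected) (hcard : 2 ≤ Fintype.card ι)
    (x : ι → ℕ → ℝ) (y : ι → ℕ → Bool) (u : ι → ℕ → ℝ)
    (hx1 : ∀ i, 0 ≤ x i 1) (hy1 : ∀ i, y i 1 = true)
    (hu : ∀ i k, u i k =
      if h : ((G.neighborFinset i).filter (fun j => y j k = true)).Nonempty then
        (∑ j ∈ (G.neighborFinset i).filter (fun j => y j k = true), x j k) /
          (((G.neighborFinset i).filter (fun j => y j k = true)).card : ℝ)
      else 0)
    (hxdyn : ∀ i k, x i (k + 1) = max (x i k) (u i k))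
    (hydyn : ∀ i k, y i (k + 1) = decide (u i k ≤ x i k))
    (c : ℝ) (hc : c = Finset.univ.sup' Finset.univ_nonempty (fun j => x j 1))
    (V : ℕ → ℝ)
    (hV : ∀ k, V k = 2 * (Fintype.card ι : ℝ) * c - ∑ i, (x i k + x i (k - 1))) :
    ∀ k, 2 ≤ k →
      (0 ≤ V k) ∧
      (V k = 0 ↔ ∀ i, x i k = c ∧ x i (k - 1) = c) ∧
      (((¬ ∀ i, x i (k - 1) = c) ∨ (¬ ∀ i, x i k = c)) → V (k + 1) < V k) :=
  stmt_17_general G hconn x y u hx1 hu hxdyn hydyn c hc V hV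
end
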